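/- For all −1 < t < 0 and 0 < ζ ≤ 1, there exists C > 0 such that for every g ∈ SL(2,ℝ) and all x, y ∈ P: | |gx|^t − |gy|^t | ≤ C |g|^{2ζ−t} d_P(x,y)^ζ. -/

import Mathlib

open MeasureTheory Filter Topology
open scoped ENNReal

noncomputable section

abbrev SL2 : Type := Matrix.SpecialLinearGroup (Fin 2) ℝ
abbrev V2 : Type := EuclideanSpace ℝ (Fin 2)
abbrev P1 : Type := Projectivization ℝ V2

instance : TopologicalSpace SL2 :=
  inferInstanceAs (TopologicalSpace {A : Matrix (Fin 2) (Fin 2) ℝ // A.det = 1})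
instance : MeasurableSpace SL2 := borel SL2
instance : BorelSpace SL2 := ⟨rfl⟩
instance : TopologicalSpace P1 :=
  inferInstanceAs (TopologicalSpace (Quotient (projectivizationSetoid ℝ V2)))
instance : MeasurableSpace P1 := borel P1
instance : BorelSpace P1 := ⟨rfl⟩

def gnorm (g : SL2) : ℝ := ‖Matrix.toEuclideanCLM (𝕜 := ℝ) (g : Matrix (Fin 2) (Fin 2) ℝ)‖

def gvec (g : SL2) (u : V2) : V2 :=
  Matrix.toEuclideanCLM (𝕜 := ℝ) (g : Matrix (Fin 2) (Fin 2) ℝ) u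

lemma gvec_mul (g h : SL2) (u : V2) : gvec g (gvec h u) = gvec (g * h) u := by
  simp [gvec, Matrix.SpecialLinearGroup.coe_mul, map_mul, ContinuousLinearMap.mul_apply]

lemma gvec_one (u : V2) : gvec 1 u = u := by
  simp [gvec]

lemma gvec_ne_zero (g : SL2) {u : V2} (hu : u ≠ 0) : gvec g u ≠ 0 := by
  intro h
  apply hu
  have h2 := congrArg (gvec g⁻¹) h
  rw [gvec_mul, inv_mul_cancel, gvec_one] at h2
  rw [h2]
  simp [gvec]

def pact (g : SL2) (x : P1) : P1 :=
  Projectivization.mk ℝ (gvec g x.rep) (gvec_ne_zero g x.rep_nonzero)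

def dP (x y : P1) : ℝ :=
  |x.rep 0 * y.rep 1 - x.rep 1 * y.rep 0| / (‖x.rep‖ * ‖y.rep‖)

def gxnorm (g : SL2) (x : P1) : ℝ := ‖gvec g x.rep‖ / ‖x.rep‖

def pInner (x y : P1) : ℝ := |(inner ℝ x.rep y.rep : ℝ)| / (‖x.rep‖ * ‖y.rep‖)

/-- The (topological) support of a measure. -/
def msupp (μ : Measure SL2) : Set SL2 :=
  {g | ∀ U : Set SL2, IsOpen U → g ∈ U → 0 < μ U}

def IsCompactlySupported (μ : Measure SL2) : Prop :=
  ∃ K : Set SL2, IsCompact K ∧ μ Kᶜ = 0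

/-- The closed semigroup generated by the support of `μ`. -/
def Smu (μ : Measure SL2) : Set SL2 :=
  closure ((Subsemigroup.closure (msupp μ) : Subsemigroup SL2) : Set SL2)

def StronglyIrreducible (μ : Measure SL2) : Prop :=
  ¬ ∃ F : Finset P1, F.Nonempty ∧ ∀ g ∈ Smu μ, ∀ x ∈ F, pact g x ∈ F

def Proximal (μ : Measure SL2) : Prop :=
  ∃ g ∈ Smu μ, 2 < |Matrix.trace (g : Matrix (Fin 2) (Fin 2) ℝ)|

def SIP (μ : Measure SL2) : Prop := StronglyIrreducible μ ∧ Proximal μ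

/-- `convPow μ n` is the `n`-th convolution power `μⁿ`. -/
def convPow (μ : Measure SL2) : ℕ → Measure SL2
  | 0 => Measure.dirac 1
  | n + 1 => Measure.map (fun p : SL2 × SL2 => p.1 * p.2) ((convPow μ n).prod μ)

def IsOmegaMinus (ω : SL2 → P1) : Prop :=
  ∀ g : SL2, 1 < gnorm g → gxnorm g (ω g) = (gnorm g)⁻¹

def IsUpsilonPlus (υ : SL2 → P1) : Prop :=
  ∀ g : SL2, 1 < gnorm g⁻¹ → gxnorm g⁻¹ (υ g) = (gnorm g⁻¹)⁻¹

def Eball (α ε : ℝ) (n : ℕ) : Set SL2 :=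
  {g | |(n : ℝ)⁻¹ * Real.log (gnorm g) - α| ≤ ε}

def Egam (ω : SL2 → P1) (γ α ε : ℝ) (n : ℕ) (x : P1) : Set SL2 :=
  {g | g ∈ Eball α ε n ∧ dP x (ω g) ≤ Real.exp (-(n : ℝ) * (γ - ε) * α)}

def EgamStar (υ : SL2 → P1) (α ε : ℝ) (n : ℕ) (x : P1) : Set SL2 :=
  {g | g ∈ Eball α ε n ∧ dP x (υ g) ≤ Real.exp (-(n : ℝ) * (2 - ε) * α)}

def Etilde (ω : SL2 → P1) (γ α ε : ℝ) (n : ℕ) (x : P1) : Set SL2 :=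
  if γ < 2 then
    {g | g ∈ Eball α ε n ∧ Real.exp (-(n : ℝ) * (γ + ε) * α) ≤ dP x (ω g) ∧
      dP x (ω g) ≤ Real.exp (-(n : ℝ) * (γ - ε) * α)}
  else Egam ω 2 α ε n x

def IfinN (μ : Measure SL2) (ω : SL2 → P1) (γ α ε : ℝ) (n : ℕ) : EReal :=
  (((n : ℝ)⁻¹ : ℝ) : EReal) * ENNReal.log (⨆ x : P1, convPow μ n (Egam ω γ α ε n x))

def Ieps (μ : Measure SL2) (ω : SL2 → P1) (γ α ε : ℝ) : EReal :=
  Filter.atTop.limsup (fun n => IfinN μ ω γ α ε n)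

def Ifinal (μ : Measure SL2) (ω : SL2 → P1) (γ α : ℝ) : EReal :=
  ⨅ (ε : ℝ) (_ : 0 < ε), Ieps μ ω γ α ε

def Aset (μ : Measure SL2) (ω : SL2 → P1) : Set ℝ :=
  {α : ℝ | Ifinal μ ω 0 α ≠ ⊥}

def I2starEps (μ : Measure SL2) (υ : SL2 → P1) (α ε : ℝ) : EReal :=
  Filter.atTop.limsup (fun n : ℕ =>
    (((n : ℝ)⁻¹ : ℝ) : EReal) * ENNReal.log (⨆ x : P1, convPow μ n (EgamStar υ α ε n x)))

def I2star (μ : Measure SL2) (υ : SL2 → P1) (α : ℝ) : EReal :=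
  ⨅ (ε : ℝ) (_ : 0 < ε), I2starEps μ υ α ε

def kSeq (μ : Measure SL2) (t : ℝ) (n : ℕ) : ℝ :=
  (n : ℝ)⁻¹ * Real.log (∫ g, gnorm g ^ t ∂ convPow μ n)

/-- `k : ℝ → ℝ` is the limit defining `k(t)`. -/
def KTendsto (μ : Measure SL2) (k : ℝ → ℝ) : Prop :=
  ∀ t : ℝ, Filter.Tendsto (fun n => kSeq μ t n) Filter.atTop (nhds (k t))

def kplusSeq (μ : Measure SL2) (t : ℝ) (n : ℕ) : ℝ :=
  (n : ℝ)⁻¹ * Real.log (⨆ x : P1, ∫ g, gxnorm g x ^ t ∂ convPow μ n)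

def kplus (μ : Measure SL2) (t : ℝ) : ℝ :=
  Filter.atTop.limsup (fun n => kplusSeq μ t n)

def sup2 (μ : Measure SL2) (ω : SL2 → P1) (t : ℝ) : EReal :=
  ⨆ α ∈ Aset μ ω, (Ifinal μ ω 2 α + ((-(t * α) : ℝ) : EReal))

def tc (μ : Measure SL2) (ω : SL2 → P1) (k : ℝ → ℝ) : ℝ :=
  sInf {t : ℝ | sup2 μ ω t < ((k t : ℝ) : EReal)}

def zetat (μ : Measure SL2) (ω : SL2 → P1) (k : ℝ → ℝ) (t : ℝ) : ℝ :=
  sSup {ζ : ℝ |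
    (⨆ α ∈ Aset μ ω, (Ifinal μ ω 2 α + ((-(t * α) + 2 * ζ * α : ℝ) : EReal)))
      < ((k t : ℝ) : EReal)}

def Pt (μ : Measure SL2) (t : ℝ) (ψ : P1 → ℝ) : P1 → ℝ :=
  fun x => ∫ g, gxnorm g x ^ t * ψ (pact g x) ∂μ

def sl2transpose (g : SL2) : SL2 :=
  ⟨Matrix.transpose (g : Matrix (Fin 2) (Fin 2) ℝ), by rw [Matrix.det_transpose]; exact g.2⟩

def PtStar (μ : Measure SL2) (t : ℝ) (ψ : P1 → ℝ) : P1 → ℝ :=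
  fun w => ∫ g, gxnorm (sl2transpose g) w ^ t * ψ (pact (sl2transpose g) w) ∂μ

def BoundedFn (f : P1 → ℝ) : Prop := ∃ M : ℝ, ∀ x, |f x| ≤ M

def IsEigenMeas (μ : Measure SL2) (t : ℝ) (ν : Measure P1) (c : ℝ) : Prop :=
  ∀ f : P1 → ℝ, Measurable f → BoundedFn f →
    ∫ x, Pt μ t f x ∂ν = c * ∫ x, f x ∂ν

def IsEigenMeasStar (μ : Measure SL2) (t : ℝ) (ν : Measure P1) (c : ℝ) : Prop :=
  ∀ f : P1 → ℝ, Measurable f → BoundedFn f →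
    ∫ x, PtStar μ t f x ∂ν = c * ∫ x, f x ∂ν

def IsFurstenberg (μ : Measure SL2) (ν : Measure P1) : Prop :=
  IsProbabilityMeasure ν ∧ ∀ f : P1 → ℝ, Measurable f → BoundedFn f →
    ∫ g, (∫ x, f (pact g x) ∂ν) ∂μ = ∫ x, f x ∂ν

def HolderWithC (C ζ : ℝ) (f : P1 → ℝ) : Prop :=
  ∀ x y : P1, |f x - f y| ≤ C * dP x y ^ ζ

def HolderFn (ζ : ℝ) (f : P1 → ℝ) : Prop := ∃ C : ℝ, HolderWithC C ζ f

def hSemi (ζ : ℝ) (f : P1 → ℝ) : ℝ :=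
  sSup {c : ℝ | ∃ x y : P1, x ≠ y ∧ c = |f x - f y| / dP x y ^ ζ}

def supNorm (f : P1 → ℝ) : ℝ := ⨆ x : P1, |f x|

def hNorm (ζ : ℝ) (f : P1 → ℝ) : ℝ := hSemi ζ f + supNorm f

def frostman (ν : Measure P1) : ℝ :=
  sSup {s : ℝ | 0 ≤ s ∧ ∃ C : ℝ, 0 < C ∧
    ∀ x : P1, ∀ r : ℝ, 0 < r → (ν {y | dP x y ≤ r}).toReal ≤ C * r ^ s}

def rotSL (θ : ℝ) : SL2 :=
  ⟨!![Real.cos θ, -Real.sin θ; Real.sin θ, Real.cos θ], by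
    simp [Matrix.det_fin_two_of]
    ring_nf
    rw [← Real.sin_sq_add_cos_sq θ]
    ring⟩

def IsRotInvariant (lam : Measure P1) : Prop :=
  IsProbabilityMeasure lam ∧ ∀ θ : ℝ, Measure.map (pact (rotSL θ)) lam = lam

def riesz (t : ℝ) (ν : Measure P1) (x : P1) : ℝ≥0∞ :=
  ∫⁻ y, ENNReal.ofReal (dP x y) ^ t ∂ν

/-!
Unimodularity gives `|gu ∧ gv| = |u ∧ v|`, hence `|gx| ≥ |g|⁻¹` for every `x`. So `|gx|^t` takes
values in `[0, |g|^(-t)]`, and since `x ↦ |gx|` is `√2 |g|`-Lipschitz for `d_P` while `s ↦ s^t` is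
`|t| |g|^(1-t)`-Lipschitz on `[|g|⁻¹, ∞)`, the difference `| |gx|^t - |gy|^t |` is bounded both by
`|g|^(-t)` and by `√2 |t| |g|^(2-t) d_P(x,y)`. The geometric mean of these two bounds with weights
`1 - ζ` and `ζ` is the claimed estimate.
-/

lemma Real.abs_rpow_sub_rpow_le {t ε a b : ℝ} (ht : t ≤ 1) (hε : 0 < ε) (ha : ε ≤ a)
    (hb : ε ≤ b) : |a ^ t - b ^ t| ≤ |t| * ε ^ (t - 1) * |a - b| := by
  have h := (convex_Ici ε).norm_image_sub_le_of_norm_hasDerivWithin_le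
    (f := fun x : ℝ => x ^ t) (f' := fun x => t * x ^ (t - 1))
    (fun x hx => (Real.hasDerivAt_rpow_const
      (Or.inl (hε.trans_le hx).ne')).hasDerivWithinAt)
    (fun x hx => by
      rw [Real.norm_eq_abs, abs_mul, abs_of_nonneg (Real.rpow_nonneg (hε.trans_le hx).le _)]
      exact mul_le_mul_of_nonneg_left
        (Real.rpow_le_rpow_of_nonpos hε hx (by linarith)) (abs_nonneg t))
    hb ha
  simpa only [Real.norm_eq_abs] using h

lemma Real.le_rpow_mul_rpow_of_le_of_le {X A B ζ : ℝ} (hX : 0 ≤ X) (hA : X ≤ A) (hB : X ≤ B)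
    (hζ₀ : 0 ≤ ζ) (hζ₁ : ζ ≤ 1) : X ≤ A ^ ζ * B ^ (1 - ζ) :=
  calc X = X ^ ζ * X ^ (1 - ζ) := by
        rw [← Real.rpow_add_of_nonneg hX hζ₀ (by linarith), add_sub_cancel, Real.rpow_one]
    _ ≤ A ^ ζ * B ^ (1 - ζ) := by
        gcongr
        exact Real.rpow_nonneg (hX.trans hA) _

open RealInnerProductSpace

namespace SL2Action

/-- The area form `u ∧ v` on `ℝ²`. -/
def wedge (u v : V2) : ℝ := u 0 * v 1 - u 1 * v 0

lemma norm_sq_eq (u : V2) : ‖u‖ ^ 2 = u 0 ^ 2 + u 1 ^ 2 := by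
  simp [EuclideanSpace.real_norm_sq_eq, Fin.sum_univ_two]

lemma inner_eq (u v : V2) : ⟪u, v⟫ = u 0 * v 0 + u 1 * v 1 := by
  simp [PiLp.inner_apply, Fin.sum_univ_two, mul_comm]

lemma wedge_sq_add_inner_sq (u v : V2) : wedge u v ^ 2 + ⟪u, v⟫ ^ 2 = ‖u‖ ^ 2 * ‖v‖ ^ 2 := by
  rw [inner_eq, norm_sq_eq, norm_sq_eq, wedge]
  ring

lemma abs_wedge_le (u v : V2) : |wedge u v| ≤ ‖u‖ * ‖v‖ := by
  refine abs_le_of_sq_le_sq ?_ (by positivity)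
  nlinarith [wedge_sq_add_inner_sq u v, sq_nonneg ⟪u, v⟫]

lemma wedge_smul_smul (a b : ℝ) (u v : V2) : wedge (a • u) (b • v) = a * b * wedge u v := by
  simp only [wedge, PiLp.smul_apply, smul_eq_mul]
  ring

lemma wedge_neg_right (u v : V2) : wedge u (-v) = -wedge u v := by
  simp only [wedge, PiLp.neg_apply]
  ring

lemma gvec_apply (g : SL2) (u : V2) (i : Fin 2) :
    gvec g u i = (g : Matrix (Fin 2) (Fin 2) ℝ) i 0 * u 0
      + (g : Matrix (Fin 2) (Fin 2) ℝ) i 1 * u 1 := by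
  simp [gvec, Matrix.mulVec, dotProduct, Fin.sum_univ_two]

lemma wedge_gvec (g : SL2) (u v : V2) : wedge (gvec g u) (gvec g v) = wedge u v := by
  have hdet := g.2
  rw [Matrix.det_fin_two] at hdet
  simp only [wedge, gvec_apply]
  linear_combination (u 0 * v 1 - u 1 * v 0) * hdet

lemma gvec_sub (g : SL2) (u v : V2) : gvec g (u - v) = gvec g u - gvec g v :=
  map_sub _ u v

lemma gvec_neg (g : SL2) (u : V2) : gvec g (-u) = -gvec g u :=
  map_neg _ u

lemma gvec_smul (g : SL2) (c : ℝ) (u : V2) : gvec g (c • u) = c • gvec g u :=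
  map_smul _ c u

lemma norm_gvec_le (g : SL2) (u : V2) : ‖gvec g u‖ ≤ gnorm g * ‖u‖ :=
  (Matrix.toEuclideanCLM (𝕜 := ℝ) (g : Matrix (Fin 2) (Fin 2) ℝ)).le_opNorm u

def rot (u : V2) : V2 := !₂[-u 1, u 0]

lemma norm_rot (u : V2) : ‖rot u‖ = ‖u‖ := by
  rw [← sq_eq_sq₀ (norm_nonneg _) (norm_nonneg _), norm_sq_eq, norm_sq_eq]
  simp only [rot, Matrix.cons_val_zero, Matrix.cons_val_one, Matrix.cons_val_fin_one]
  ring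

lemma wedge_rot (u : V2) : wedge u (rot u) = ‖u‖ ^ 2 := by
  simp only [wedge, rot, norm_sq_eq, Matrix.cons_val_zero, Matrix.cons_val_one,
    Matrix.cons_val_fin_one]
  ring

/-- Since `g` preserves area, `‖u‖² = |gu ∧ g(rot u)| ≤ ‖gu‖ ‖g‖ ‖u‖`. -/
lemma norm_le_gnorm_mul_norm_gvec (g : SL2) (u : V2) : ‖u‖ ≤ gnorm g * ‖gvec g u‖ := by
  rcases (norm_nonneg u).eq_or_lt with hu | hu
  · rw [← hu]
    exact mul_nonneg (norm_nonneg _) (norm_nonneg _)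
  have key : ‖u‖ * ‖u‖ ≤ gnorm g * ‖gvec g u‖ * ‖u‖ :=
    calc ‖u‖ * ‖u‖ = |wedge (gvec g u) (gvec g (rot u))| := by
          rw [wedge_gvec, wedge_rot, abs_of_nonneg (sq_nonneg _), sq]
      _ ≤ ‖gvec g u‖ * ‖gvec g (rot u)‖ := abs_wedge_le _ _
      _ ≤ ‖gvec g u‖ * (gnorm g * ‖u‖) := by
          rw [← norm_rot u]
          exact mul_le_mul_of_nonneg_left (norm_gvec_le g _) (norm_nonneg _)
      _ = gnorm g * ‖gvec g u‖ * ‖u‖ := by ring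
  exact le_of_mul_le_mul_right key hu

lemma gnorm_pos (g : SL2) : 0 < gnorm g := by
  obtain ⟨u, hu⟩ := exists_ne (0 : V2)
  have h := norm_le_gnorm_mul_norm_gvec g u
  exact pos_of_mul_pos_left ((norm_pos_iff.2 hu).trans_le h) (norm_nonneg _)

lemma inv_gnorm_le_gxnorm (g : SL2) (x : P1) : (gnorm g)⁻¹ ≤ gxnorm g x := by
  rw [gxnorm, le_div_iff₀ (norm_pos_iff.2 x.rep_nonzero), inv_mul_le_iff₀ (gnorm_pos g)]
  exact norm_le_gnorm_mul_norm_gvec g _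

lemma norm_sub_le_sqrt_two_mul_abs_wedge {p q : V2} (hp : ‖p‖ = 1) (hq : ‖q‖ = 1)
    (hpq : 0 ≤ ⟪p, q⟫) : ‖p - q‖ ≤ √2 * |wedge p q| := by
  have h := wedge_sq_add_inner_sq p q
  rw [hp, hq] at h
  refine abs_le_of_sq_le_sq' ?_ (by positivity) |>.2
  rw [norm_sub_sq_real, hp, hq, mul_pow, Real.sq_sqrt zero_le_two, sq_abs]
  nlinarith

lemma abs_norm_gvec_sub_norm_gvec_le (g : SL2) {p q : V2} (hp : ‖p‖ = 1) (hq : ‖q‖ = 1) :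
    |‖gvec g p‖ - ‖gvec g q‖| ≤ √2 * gnorm g * |wedge p q| := by
  wlog hpq : 0 ≤ ⟪p, q⟫ generalizing q
  · have h := this (q := -q) (by rwa [norm_neg]) (by rw [inner_neg_right]; linarith)
    rwa [gvec_neg, norm_neg, wedge_neg_right, abs_neg] at h
  calc |‖gvec g p‖ - ‖gvec g q‖| ≤ ‖gvec g p - gvec g q‖ := abs_norm_sub_norm_le _ _
    _ = ‖gvec g (p - q)‖ := by rw [gvec_sub]
    _ ≤ gnorm g * (√2 * |wedge p q|) :=
        (norm_gvec_le g _).trans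
          (mul_le_mul_of_nonneg_left (norm_sub_le_sqrt_two_mul_abs_wedge hp hq hpq)
            (gnorm_pos g).le)
    _ = √2 * gnorm g * |wedge p q| := by ring

lemma gxnorm_eq_norm_gvec_normalize (g : SL2) (x : P1) :
    gxnorm g x = ‖gvec g (NormedSpace.normalize x.rep)‖ := by
  rw [gxnorm, NormedSpace.normalize, gvec_smul, norm_smul, norm_inv, norm_norm, div_eq_inv_mul]

lemma dP_eq_abs_wedge_normalize (x y : P1) :
    dP x y = |wedge (NormedSpace.normalize x.rep) (NormedSpace.normalize y.rep)| := by
  rw [dP, NormedSpace.normalize, NormedSpace.normalize, wedge_smul_smul, ← mul_inv, abs_mul,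
    abs_inv, abs_mul, abs_norm, abs_norm, inv_mul_eq_div, wedge]

lemma dP_nonneg (x y : P1) : 0 ≤ dP x y := by
  rw [dP_eq_abs_wedge_normalize]
  exact abs_nonneg _

lemma abs_gxnorm_sub_gxnorm_le (g : SL2) (x y : P1) :
    |gxnorm g x - gxnorm g y| ≤ √2 * gnorm g * dP x y := by
  rw [gxnorm_eq_norm_gvec_normalize, gxnorm_eq_norm_gvec_normalize, dP_eq_abs_wedge_normalize]
  exact abs_norm_gvec_sub_norm_gvec_le g (NormedSpace.norm_normalize x.rep_nonzero)
    (NormedSpace.norm_normalize y.rep_nonzero)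

lemma gxnorm_pos (g : SL2) (x : P1) : 0 < gxnorm g x :=
  (inv_pos.2 (gnorm_pos g)).trans_le (inv_gnorm_le_gxnorm g x)

lemma gxnorm_rpow_le (g : SL2) (x : P1) {t : ℝ} (ht : t ≤ 0) :
    gxnorm g x ^ t ≤ gnorm g ^ (-t) := by
  have h := Real.rpow_le_rpow_of_nonpos (inv_pos.2 (gnorm_pos g)) (inv_gnorm_le_gxnorm g x) ht
  rwa [Real.inv_rpow (gnorm_pos g).le, ← Real.rpow_neg (gnorm_pos g).le] at h

lemma abs_gxnorm_rpow_sub_le (g : SL2) (x y : P1) {t : ℝ} (ht : t ≤ 0) :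
    |gxnorm g x ^ t - gxnorm g y ^ t| ≤ gnorm g ^ (-t) :=
  abs_sub_le_of_nonneg_of_le (Real.rpow_nonneg (gxnorm_pos g x).le _) (gxnorm_rpow_le g x ht)
    (Real.rpow_nonneg (gxnorm_pos g y).le _) (gxnorm_rpow_le g y ht)

lemma abs_gxnorm_rpow_sub_le_mul_dP (g : SL2) (x y : P1) {t : ℝ} (ht : t ≤ 1) :
    |gxnorm g x ^ t - gxnorm g y ^ t| ≤ √2 * |t| * gnorm g ^ (2 - t) * dP x y := by
  have hN := gnorm_pos g
  calc |gxnorm g x ^ t - gxnorm g y ^ t|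
      ≤ |t| * (gnorm g)⁻¹ ^ (t - 1) * |gxnorm g x - gxnorm g y| :=
        Real.abs_rpow_sub_rpow_le ht (inv_pos.2 hN) (inv_gnorm_le_gxnorm g x)
          (inv_gnorm_le_gxnorm g y)
    _ ≤ |t| * gnorm g ^ (1 - t) * (√2 * gnorm g * dP x y) := by
        rw [Real.inv_rpow hN.le, ← Real.rpow_neg hN.le, neg_sub]
        gcongr
        exact abs_gxnorm_sub_gxnorm_le g x y
    _ = √2 * |t| * gnorm g ^ (2 - t) * dP x y := by
        rw [show 2 - t = (1 - t) + 1 by ring, Real.rpow_add hN, Real.rpow_one]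
        ring

end SL2Action

open SL2Action

theorem statement15_general (t ζ : ℝ) (ht2 : t < 0) (hζ1 : 0 < ζ) (hζ2 : ζ ≤ 1) :
    ∃ C : ℝ, 0 < C ∧ ∀ (g : SL2) (x y : P1),
      |gxnorm g x ^ t - gxnorm g y ^ t| ≤ C * gnorm g ^ (2 * ζ - t) * dP x y ^ ζ := by
  have ht : 0 < |t| := abs_pos.2 ht2.ne
  refine ⟨(√2 * |t|) ^ ζ, by positivity, fun g x y => ?_⟩
  have hN := gnorm_pos g
  calc |gxnorm g x ^ t - gxnorm g y ^ t|
      ≤ (√2 * |t| * gnorm g ^ (2 - t) * dP x y) ^ ζ * (gnorm g ^ (-t)) ^ (1 - ζ) :=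
        Real.le_rpow_mul_rpow_of_le_of_le (abs_nonneg _)
          (abs_gxnorm_rpow_sub_le_mul_dP g x y (by linarith))
          (abs_gxnorm_rpow_sub_le g x y ht2.le) hζ1.le hζ2
    _ = (√2 * |t|) ^ ζ * gnorm g ^ (2 * ζ - t) * dP x y ^ ζ := by
        rw [Real.mul_rpow (by positivity) (dP_nonneg x y), Real.mul_rpow (by positivity)
          (by positivity), ← Real.rpow_mul hN.le, ← Real.rpow_mul hN.le,
          show 2 * ζ - t = (2 - t) * ζ + -t * (1 - ζ) by ring, Real.rpow_add hN]
        ring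

/-- Hölder estimate for `x ↦ |gx|^t`. -/
theorem statement15 (t ζ : ℝ) (ht1 : -1 < t) (ht2 : t < 0) (hζ1 : 0 < ζ) (hζ2 : ζ ≤ 1) :
    ∃ C : ℝ, 0 < C ∧ ∀ (g : SL2) (x y : P1),
      |gxnorm g x ^ t - gxnorm g y ^ t| ≤ C * gnorm g ^ (2 * ζ - t) * dP x y ^ ζ :=
  statement15_general t ζ ht2 hζ1 hζ2
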